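/- If f : Ω → ℝ^{2k} is differentiable at a in the sense that the limit of (f(a+δ) - f(a)) ⊛ δ⁻¹ exists as δ → 0 through the units G_{2k}, then its component functions satisfy the generalized Cauchy–Riemann equations: ∂f_m/∂x_i = ∂f_{m+k}/∂x_{i+k} and ∂f_{m+k}/∂x_i = -∂f_m/∂x_{i+k} for all 1 ≤ m, i ≤ k. -/

import Mathlib

open Matrix MeasureTheory Filter

noncomputable def gmat (n : ℕ) : Matrix (Fin n) (Fin n) ℝ :=
  Matrix.of fun i j => if (j : ℕ) = (i : ℕ) + 1 then 1
    else if (i : ℕ) = n - 1 ∧ (j : ℕ) = 0 then (-1) else 0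

noncomputable def sig (n : ℕ) (u : Fin n → ℝ) : Matrix (Fin n) (Fin n) ℝ :=
  ∑ ℓ : Fin n, u ℓ • gmat n ^ (ℓ : ℕ)

noncomputable def emul (n : ℕ) [NeZero n] (u v : Fin n → ℝ) : Fin n → ℝ :=
  fun j => (sig n u * sig n v) 0 j

noncomputable def einv (n : ℕ) [NeZero n] (u : Fin n → ℝ) : Fin n → ℝ :=
  fun j => (sig n u)⁻¹ 0 j

noncomputable def pd2 (n : ℕ) (h : (Fin n → ℝ) → ℝ) (i : Fin n) (a : Fin n → ℝ) : ℝ :=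
  lineDeriv ℝ (fun x => lineDeriv ℝ h x (Pi.single i 1)) a (Pi.single i 1)

/-!
Right multiplication by `v` in `ℝ_n` is the matrix `sig n v = ∑ vₗ gˡ`, where `g = gmat n`
(multiplication by `w`) is the negacyclic shift, so `gⁿ = -1`. Row `0` of `sig n v` is `v`,
hence `u ⊛ v = u ᵥ* sig n v`. Along the ray `δ = t eⱼ` we have `sig n δ = t gʲ`, whose inverse
is `t⁻¹ g^(2n - j)`, so the difference quotient multiplied by `gʲ` is the ordinary slope of `f`
in direction `eⱼ`; in the limit `∂ⱼ f(a) = L ᵥ* gʲ`. For `n = 2k` this gives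
`∂_{i+k} f = ∂ᵢ f ᵥ* gᵏ`, and `gᵏ` sends the first half of the coordinates to the second and
the second to minus the first: these are the two Cauchy–Riemann equations.
-/

open Topology

section

variable {n : ℕ}

theorem gmat_mul_apply (M : Matrix (Fin n) (Fin n) ℝ) (i j : Fin n) :
    (gmat n * M) i j =
      if h : (i : ℕ) + 1 < n then M ⟨i + 1, h⟩ j else -M ⟨0, i.pos⟩ j := by
  rw [mul_apply]
  split_ifs with h
  · rw [Finset.sum_eq_single ⟨i + 1, h⟩]
    · simp [gmat]
    · intro p _ hp
      simp only [gmat, of_apply]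
      rw [if_neg (fun h' => hp (Fin.ext h')), if_neg (by omega), zero_mul]
    · simp
  · rw [Finset.sum_eq_single ⟨0, i.pos⟩]
    · simp only [gmat, of_apply]
      rw [if_neg (by omega), if_pos ⟨by omega, trivial⟩, neg_one_mul]
    · intro p _ hp
      simp only [gmat, of_apply]
      rw [if_neg (by omega), if_neg (fun h' => hp (Fin.ext h'.2)), zero_mul]
    · simp

theorem gmat_pow_apply {ℓ : ℕ} (hℓ : ℓ ≤ n) (i j : Fin n) :
    (gmat n ^ ℓ) i j =
      if (j : ℕ) = i + ℓ then 1 else if (i : ℕ) + ℓ = n + j then -1 else 0 := by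
  induction ℓ generalizing i with
  | zero =>
    have := i.isLt
    simp only [pow_zero, one_apply, add_zero, Fin.ext_iff]
    split_ifs <;> first | rfl | omega
  | succ ℓ ih =>
    rw [pow_succ', gmat_mul_apply]
    split_ifs <;> simp only [ih (by omega)] <;> split_ifs <;> first | omega | norm_num

theorem gmat_pow_self : gmat n ^ n = -1 := by
  ext i j
  have := i.isLt
  have := j.isLt
  rw [gmat_pow_apply le_rfl, neg_apply, one_apply]
  simp only [Fin.ext_iff]
  split_ifs <;> first | omega | norm_num

theorem gmat_pow_zero_row [NeZero n] (ℓ : Fin n) :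
    (gmat n ^ (ℓ : ℕ)) 0 = Pi.single ℓ 1 := by
  ext j
  have := j.isLt
  have := ℓ.isLt
  rw [gmat_pow_apply ℓ.isLt.le, Pi.single_apply]
  simp only [Fin.ext_iff, Fin.val_zero, zero_add]
  split_ifs <;> first | omega | rfl

theorem sig_apply_zero [NeZero n] (u : Fin n → ℝ) : sig n u 0 = u := by
  ext m
  simp [sig, Matrix.sum_apply, gmat_pow_zero_row, Pi.single_apply]

theorem sig_smul (c : ℝ) (u : Fin n → ℝ) : sig n (c • u) = c • sig n u := by
  simp [sig, Finset.smul_sum, smul_smul]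

theorem sig_single_one (j : Fin n) : sig n (Pi.single j 1) = gmat n ^ (j : ℕ) := by
  rw [sig, Finset.sum_eq_single j (fun p _ hp => by simp [hp]) (by simp)]
  simp

theorem emul_eq_vecMul [NeZero n] (u v : Fin n → ℝ) : emul n u v = u ᵥ* sig n v := by
  change (sig n u * sig n v) 0 = _
  rw [mul_apply_eq_vecMul, sig_apply_zero]

theorem sig_gmat_pow_zero_row [NeZero n] (ℓ : ℕ) :
    sig n ((gmat n ^ ℓ) 0) = gmat n ^ ℓ := by
  induction ℓ using Nat.strong_induction_on with
  | _ ℓ ih =>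
    rcases lt_or_ge ℓ n with h | h
    · simpa [sig_single_one] using congrArg (sig n) (gmat_pow_zero_row ⟨ℓ, h⟩)
    · obtain ⟨m, rfl⟩ := Nat.exists_eq_add_of_le' h
      have := NeZero.pos n
      rw [pow_add, gmat_pow_self, mul_neg_one]
      change sig n (-(gmat n ^ m) 0) = _
      rw [← neg_one_smul ℝ, sig_smul, ih m (by omega), neg_one_smul]

theorem gmat_pow_two_mul : gmat n ^ (2 * n) = 1 := by
  rw [mul_comm, pow_mul, gmat_pow_self, neg_one_sq]

theorem sig_smul_single_mul_smul_gmat_pow {t : ℝ} (ht : t ≠ 0) (j : Fin n) :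
    sig n (t • Pi.single j 1) * (t⁻¹ • gmat n ^ (2 * n - j)) = 1 := by
  rw [sig_smul, sig_single_one, smul_mul_smul_comm, ← pow_add,
    Nat.add_sub_cancel' (by omega), gmat_pow_two_mul, mul_inv_cancel₀ ht, one_smul]

theorem einv_smul_single [NeZero n] {t : ℝ} (ht : t ≠ 0) (j : Fin n) :
    einv n (t • Pi.single j 1) = t⁻¹ • (gmat n ^ (2 * n - j)) 0 := by
  ext m
  simp [einv, inv_eq_right_inv (sig_smul_single_mul_smul_gmat_pow ht j)]

theorem emul_einv_smul_single_vecMul [NeZero n] (u : Fin n → ℝ) {t : ℝ} (ht : t ≠ 0)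
    (j : Fin n) : emul n u (einv n (t • Pi.single j 1)) ᵥ* gmat n ^ (j : ℕ) = t⁻¹ • u := by
  rw [emul_eq_vecMul, einv_smul_single ht, sig_smul, sig_gmat_pow_zero_row, vecMul_vecMul,
    smul_mul, ← pow_add, Nat.sub_add_cancel (by omega), gmat_pow_two_mul, vecMul_smul,
    vecMul_one]

theorem hasLineDerivAt_of_tendsto_emul_einv [NeZero n]
    {f : (Fin n → ℝ) → Fin n → ℝ} {a L : Fin n → ℝ}
    (hL : Tendsto (fun δ => emul n (f (a + δ) - f a) (einv n δ))
      (𝓝[{δ | (sig n δ).det ≠ 0}] 0) (𝓝 L)) (j : Fin n) :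
    HasLineDerivAt ℝ f (L ᵥ* gmat n ^ (j : ℕ)) a (Pi.single j 1) := by
  have hpath : Tendsto (fun t : ℝ => t • (Pi.single j 1 : Fin n → ℝ)) (𝓝[≠] 0)
      (𝓝[{δ | (sig n δ).det ≠ 0}] 0) := by
    refine tendsto_nhdsWithin_iff.2 ⟨?_, ?_⟩
    · simpa using (tendsto_id.smul_const (Pi.single j 1 : Fin n → ℝ)).mono_left
        (nhdsWithin_le_nhds (a := (0 : ℝ)))
    · filter_upwards [self_mem_nhdsWithin] with t ht
      exact (isUnit_det_of_right_inverse (sig_smul_single_mul_smul_gmat_pow ht j)).ne_zero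
  rw [hasLineDerivAt_iff_tendsto_slope_zero]
  refine (((continuous_id.matrix_vecMul continuous_const).tendsto L).comp
    (hL.comp hpath)).congr' ?_
  filter_upwards [self_mem_nhdsWithin] with t ht
  exact emul_einv_smul_single_vecMul _ ht j

theorem vecMul_gmat_pow_half_natAdd {k : ℕ} (v : Fin (k + k) → ℝ) (m : Fin k) :
    (v ᵥ* gmat (k + k) ^ k) (Fin.natAdd k m) = v (Fin.castAdd k m) := by
  rw [vecMul, dotProduct, Finset.sum_eq_single (Fin.castAdd k m)]
  · simp [gmat_pow_apply le_add_self]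
  · intro p _ hp
    have hp' : (p : ℕ) ≠ m := fun h => hp (Fin.ext h)
    have := p.isLt
    rw [gmat_pow_apply le_add_self, if_neg, if_neg, mul_zero] <;>
      simp only [Fin.val_natAdd] <;> omega
  · simp

theorem vecMul_gmat_pow_half_castAdd {k : ℕ} (v : Fin (k + k) → ℝ) (m : Fin k) :
    (v ᵥ* gmat (k + k) ^ k) (Fin.castAdd k m) = -v (Fin.natAdd k m) := by
  rw [vecMul, dotProduct, Finset.sum_eq_single (Fin.natAdd k m)]
  · rw [gmat_pow_apply le_add_self, if_neg, if_pos, mul_neg_one] <;>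
      simp only [Fin.val_natAdd, Fin.val_castAdd] <;> omega
  · intro p _ hp
    have hp' : (p : ℕ) ≠ k + m := fun h => hp (Fin.ext h)
    have := m.isLt
    rw [gmat_pow_apply le_add_self, if_neg, if_neg, mul_zero] <;>
      simp only [Fin.val_castAdd] <;> omega
  · simp

end

theorem cauchy_riemann_of_differentiable (k : ℕ) (hk : 1 ≤ k)
    (f : (Fin (k + k) → ℝ) → (Fin (k + k) → ℝ))
    (a : Fin (k + k) → ℝ)
    (hdiff : haveI : NeZero (k + k) := ⟨by omega⟩
      ∃ L : Fin (k + k) → ℝ,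
        Filter.Tendsto (fun δ => emul (k + k) (f (a + δ) - f a) (einv (k + k) δ))
          (nhdsWithin 0 {δ : Fin (k + k) → ℝ | (sig (k + k) δ).det ≠ 0}) (nhds L)) :
    ∀ m i : Fin k,
      lineDeriv ℝ (fun x => f x (Fin.castAdd k m)) a (Pi.single (Fin.castAdd k i) 1) =
        lineDeriv ℝ (fun x => f x (Fin.natAdd k m)) a (Pi.single (Fin.natAdd k i) 1) ∧
      lineDeriv ℝ (fun x => f x (Fin.natAdd k m)) a (Pi.single (Fin.castAdd k i) 1) =
        - lineDeriv ℝ (fun x => f x (Fin.castAdd k m)) a (Pi.single (Fin.natAdd k i) 1) := by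
  have : NeZero (k + k) := ⟨by omega⟩
  obtain ⟨L, hL⟩ := hdiff
  have hD (j m : Fin (k + k)) :
      lineDeriv ℝ (fun x => f x m) a (Pi.single j 1) = (L ᵥ* gmat (k + k) ^ (j : ℕ)) m :=
    HasLineDerivAt.lineDeriv (hasDerivAt_pi.1 (hasLineDerivAt_of_tendsto_emul_einv hL j) m)
  have hshift (i : Fin k) : L ᵥ* gmat (k + k) ^ (Fin.natAdd k i : ℕ) =
      (L ᵥ* gmat (k + k) ^ (Fin.castAdd k i : ℕ)) ᵥ* gmat (k + k) ^ k := by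
    rw [vecMul_vecMul, ← pow_add, Fin.val_natAdd, Fin.val_castAdd, Nat.add_comm k i]
  intro m i
  rw [hD, hD, hD, hD, hshift, vecMul_gmat_pow_half_natAdd, vecMul_gmat_pow_half_castAdd, neg_neg]
  exact ⟨rfl, rfl⟩
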